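/- Let G ∈ H_∞(ℂ₀⁺) and let β ∈ ℂ₀⁺. Then the function y defined on ℂ₀⁺ by y(s) = (G(s) − G(β))/(β − s) for s ≠ β and y(β) = −G′(β) belongs to H₂(ℂ₀⁺). -/

import Mathlib

/-!
Up to sign, `y` is the difference quotient `dslope G β`, which is holomorphic on `ℂ₀⁺` by the
removable singularity theorem. If `‖G‖ ≤ M`, then `‖G s - G β‖ ≤ 2M`, so `|y(s)| ≤ 2M/|s - β|`
away from `β`, while the Schwarz lemma on the disc of radius `Re β` about `β` gives
`|y| ≤ 2M / Re β` on that disc. Hence `|y(s)|² ≤ C / ((Re β)² + (Im s - Im β)²)` on all of `ℂ₀⁺`,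
and the right-hand side is integrable along every vertical line, uniformly in `Re s`.
-/

open MeasureTheory Complex ENNReal

noncomputable section

/-- Membership in the Hardy space `H₂(ℂ₀⁺)`: `f` is holomorphic on the right half-plane
`ℂ₀⁺ = {z : Re z > 0}` and `sup_{r>0} ∫_ℝ |f(r+iω)|² dω < ∞`. -/
def MemH2plus (f : ℂ → ℂ) : Prop :=
  DifferentiableOn ℂ f {z : ℂ | 0 < z.re} ∧
  ∃ M : ℝ≥0∞, M < ⊤ ∧ ∀ r : ℝ, 0 < r →
    (∫⁻ ω : ℝ, (‖f (r + ω * Complex.I)‖₊ : ℝ≥0∞) ^ 2) ≤ M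

/-- Membership in `H_∞(ℂ₀⁺)`: `f` is holomorphic and bounded on the right half-plane. -/
def MemHinfPlus (f : ℂ → ℂ) : Prop :=
  DifferentiableOn ℂ f {z : ℂ | 0 < z.re} ∧
  ∃ M : ℝ, ∀ z : ℂ, 0 < z.re → ‖f z‖ ≤ M

section

open Metric Set

lemma memH2plus_of_sq_norm_le {f : ℂ → ℂ} (hd : DifferentiableOn ℂ f {z : ℂ | 0 < z.re})
    {g : ℝ → ℝ} (hg : Integrable g) (hfg : ∀ s : ℂ, 0 < s.re → ‖f s‖ ^ 2 ≤ g s.im) :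
    MemH2plus f := by
  refine ⟨hd, ∫⁻ ω, ENNReal.ofReal (g ω), ?_, fun r hr => lintegral_mono fun ω => ?_⟩
  · exact (lintegral_mono fun ω => Real.ofReal_le_enorm (g ω)).trans_lt hg.hasFiniteIntegral
  · have h := hfg (r + ω * I) (by simpa using hr)
    simp only [add_im, ofReal_im, mul_im, I_re, mul_zero, ofReal_re, I_im, mul_one, zero_add,
      add_zero] at h
    rw [← enorm_eq_nnnorm, ← ofReal_norm, ← ENNReal.ofReal_pow (norm_nonneg _)]
    exact ENNReal.ofReal_le_ofReal h

lemma integrable_div_sq_add_sq_sub (C : ℝ) {a : ℝ} (ha : a ≠ 0) (b : ℝ) :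
    Integrable fun ω : ℝ => C / (a ^ 2 + (ω - b) ^ 2) := by
  have h : (fun x : ℝ => (a ^ 2 + x ^ 2)⁻¹) = fun x => (a ^ 2)⁻¹ * (1 + (x / a) ^ 2)⁻¹ := by
    funext x
    rw [← mul_inv]
    field_simp
  have hint : Integrable fun x : ℝ => (a ^ 2 + x ^ 2)⁻¹ := by
    rw [h]
    exact (integrable_inv_one_add_sq.comp_div ha).const_mul _
  simpa only [div_eq_mul_inv] using (hint.comp_sub_right b).const_mul C

lemma ball_re_subset_rightHalfPlane (β : ℂ) : ball β β.re ⊆ {z : ℂ | 0 < z.re} := by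
  intro z hz
  have h := (abs_re_le_norm (z - β)).trans_lt (mem_ball_iff_norm.mp hz)
  rw [sub_re] at h
  have := abs_lt.mp h
  simp only [mem_ofPred_eq]
  linarith

lemma ite_eq_neg_dslope (G : ℂ → ℂ) (β : ℂ) :
    (fun s : ℂ => if s = β then -deriv G β else (G s - G β) / (β - s)) =
      fun s => -dslope G β s := by
  funext s
  rcases eq_or_ne s β with rfl | hs
  · simp
  · rw [if_neg hs, dslope_of_ne _ hs, slope_def_field, ← neg_sub s β, div_neg]

lemma norm_dslope_le_div_max {f : ℂ → ℂ} {U : Set ℂ} {c : ℂ} {R C : ℝ} (hR : 0 < R)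
    (hd : DifferentiableOn ℂ f U) (hball : ball c R ⊆ U) (hbound : ∀ z ∈ U, ‖f z - f c‖ ≤ C)
    {z : ℂ} (hz : z ∈ U) : ‖dslope f c z‖ ≤ C / max R ‖z - c‖ := by
  rcases lt_or_ge ‖z - c‖ R with hzc | hzc
  · rw [max_eq_left hzc.le]
    exact norm_dslope_le_div_of_mapsTo_ball (hd.mono hball)
      (fun w hw => mem_closedBall_iff_norm.mpr (hbound w (hball hw))) (mem_ball_iff_norm.mpr hzc)
  · have hne : z ≠ c := by
      rintro rfl
      simp only [sub_self, norm_zero] at hzc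
      linarith
    rw [max_eq_right hzc, dslope_of_ne _ hne, slope_def_field, norm_div]
    exact div_le_div_of_nonneg_right (hbound z hz) (norm_nonneg _)

lemma div_max_sq_le {a b : ℝ} (ha : 0 < a) (hb : 0 ≤ b) (C : ℝ) :
    (C / max a b) ^ 2 ≤ 2 * C ^ 2 / (a ^ 2 + b ^ 2) := by
  have hmax : a ^ 2 + b ^ 2 ≤ 2 * max a b ^ 2 := by
    nlinarith [pow_le_pow_left₀ ha.le (le_max_left a b) 2, pow_le_pow_left₀ hb (le_max_right a b) 2]
  rw [div_pow, div_le_div_iff₀ (by positivity) (by positivity)]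
  calc C ^ 2 * (a ^ 2 + b ^ 2) ≤ C ^ 2 * (2 * max a b ^ 2) := by gcongr
    _ = 2 * C ^ 2 * max a b ^ 2 := by ring

lemma MemHinfPlus.sq_norm_dslope_le {G : ℂ → ℂ} (hG : MemHinfPlus G) {β : ℂ} (hβ : 0 < β.re) :
    ∃ C : ℝ, ∀ s : ℂ, 0 < s.re → ‖dslope G β s‖ ^ 2 ≤ C / (β.re ^ 2 + (s.im - β.im) ^ 2) := by
  obtain ⟨hd, M, hM⟩ := hG
  refine ⟨2 * (M + M) ^ 2, fun s hs => ?_⟩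
  have h := norm_dslope_le_div_max hβ hd (ball_re_subset_rightHalfPlane β)
    (fun z hz => (norm_sub_le _ _).trans (add_le_add (hM z hz) (hM β hβ))) hs
  have him : |s.im - β.im| ≤ ‖s - β‖ := by simpa only [sub_im] using abs_im_le_norm (s - β)
  calc ‖dslope G β s‖ ^ 2 ≤ ((M + M) / max β.re ‖s - β‖) ^ 2 :=
        pow_le_pow_left₀ (norm_nonneg _) h 2
    _ ≤ 2 * (M + M) ^ 2 / (β.re ^ 2 + ‖s - β‖ ^ 2) := div_max_sq_le hβ (norm_nonneg _) _
    _ ≤ 2 * (M + M) ^ 2 / (β.re ^ 2 + (s.im - β.im) ^ 2) := by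
        rw [← sq_abs (s.im - β.im)]
        gcongr

end

/-- Let `G ∈ H_∞(ℂ₀⁺)` and let `β ∈ ℂ₀⁺`.  Then the function `y` defined
on `ℂ₀⁺` by `y(s) = (G(s) − G(β))/(β − s)` for `s ≠ β` and `y(β) = −G′(β)` belongs to
`H₂(ℂ₀⁺)`. -/
theorem statement2 (G : ℂ → ℂ) (hG : MemHinfPlus G) (β : ℂ) (hβ : 0 < β.re) :
    MemH2plus (fun s : ℂ => if s = β then -deriv G β else (G s - G β) / (β - s)) := by
  obtain ⟨C, hC⟩ := hG.sq_norm_dslope_le hβ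
  have hd : DifferentiableOn ℂ (dslope G β) {z : ℂ | 0 < z.re} :=
    (differentiableOn_dslope ((isOpen_lt continuous_const continuous_re).mem_nhds hβ)).mpr hG.1
  rw [ite_eq_neg_dslope]
  refine memH2plus_of_sq_norm_le hd.neg (integrable_div_sq_add_sq_sub C hβ.ne' β.im) ?_
  intro s hs
  simpa only [norm_neg] using hC s hs

end
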